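/- arXiv:0709.1635 — 3 statements merged into one kernel-verified Lean document; each statement's English description precedes it below -/
import Mathlib

section
/- The rational function (R(x, y(1+t+⋯+t^r)) / (Δ(x)·Δ(y))) · det( 1/∏_{k=0}^{r}(x_i − t^k y_j) )_{i,j=1,…,n} is a polynomial in x₁,…,xₙ, y₁,…,yₙ, t, which is symmetric in the variables x₁,…,xₙ and symmetric in the variables y₁,…,yₙ. -/
/-!
Clearing the denominators of the determinant row by row gives
`gaudinF = det M / (Δ(x) Δ(y))` with the polynomial matrix
`M i j = ∏_{j' ≠ j} ∏_{k ≤ r} (x i - t ^ k * y j')`. Specialising `x i = x i'` makes two rows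
of `M` equal, and `y j = y j'` two columns, so every `x i - x i'` and `y j - y j'` divides
`det M`. These linear forms are pairwise non-associated irreducibles of the factorial ring
`ℚ[t, x, y]`, hence `Δ(x) Δ(y)` divides `det M`. Symmetry holds because permuting the `x`'s
(or the `y`'s) multiplies both the Vandermonde and the determinant by the sign.
-/

noncomputable section

open scoped BigOperators

namespace Gaudin

variable {R : Type*} [CommRing R]

/-- The generating series `∏_{b∈B}(1-zb) / ∏_{a∈A}(1-za)` of the complete
functions of the formal difference of alphabets `A - B` (the inverse is taken
via `PowerSeries.invOfUnit`, legitimate since the constant coefficient is `1`). -/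
def genSeries (A B : Multiset R) : PowerSeries R :=
  (B.map (fun b => 1 - PowerSeries.C b * PowerSeries.X)).prod *
    PowerSeries.invOfUnit ((A.map (fun a => 1 - PowerSeries.C a * PowerSeries.X)).prod) 1

/-- The complete function `S_m(A-B)`: the coefficient of `z^m` in the generating
series, and `0` for `m < 0`. -/
def Scomp (A B : Multiset R) (m : ℤ) : R :=
  if m < 0 then 0 else PowerSeries.coeff m.toNat (genSeries A B)

/-- The Schur function of index `v ∈ ℕ^p` of the difference of alphabets `A - B`:
`S_v(A-B) = det( S_{v_c + c - ρ}(A-B) )_{ρ,c = 1,…,p}`. -/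
def SchurS {p : ℕ} (A B : Multiset R) (v : Fin p → ℕ) : R :=
  Matrix.det (Matrix.of fun ρ c : Fin p => Scomp A B ((v c : ℤ) + (c : ℤ) - (ρ : ℤ)))

/-- The Vandermonde `Δ(x) = ∏_{i<j} (x_j - x_i)`. -/
def vand {n : ℕ} (x : Fin n → R) : R :=
  ∏ i : Fin n, ∏ j ∈ Finset.Ioi i, (x j - x i)

variable {K : Type*} [Field K]

/-- The Gaudin function of level `r`:
`F^r_n(x,y) = (R(x, y(1+t+⋯+t^r)) / (Δ(x)Δ(y))) · det(1/∏_{k=0}^r (x_i - t^k y_j))`. -/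
def gaudinF (n r : ℕ) (t : K) (x y : Fin n → K) : K :=
  ((∏ i : Fin n, ∏ j : Fin n, ∏ k ∈ Finset.range (r + 1), (x i - t ^ k * y j)) /
      (vand x * vand y)) *
    Matrix.det (Matrix.of fun i j : Fin n =>
      (∏ k ∈ Finset.range (r + 1), (x i - t ^ k * y j))⁻¹)

/-- The alphabet `y(1+t+⋯+t^r) = {y, ty, …, t^r y}` attached to a single letter `y`. -/
def alph1t (r : ℕ) (t yi : K) : Multiset K :=
  (Finset.univ : Finset (Fin (r + 1))).val.map fun k => t ^ (k : ℕ) * yi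

/-- The alphabet (multiset) attached to a finite family of letters. -/
def alphOf {n : ℕ} (x : Fin n → K) : Multiset K :=
  (Finset.univ : Finset (Fin n)).val.map x

/-- The ordinary Schur polynomial `s_λ(x₁,…,xₙ)` in bialternant form. -/
def schurPol {n : ℕ} (lam : Fin n → ℕ) (x : Fin n → K) : K :=
  Matrix.det (Matrix.of fun i j : Fin n => x i ^ (lam j + (n - 1 - (j : ℕ)))) /
    Matrix.det (Matrix.of fun i j : Fin n => x i ^ (n - 1 - (j : ℕ)))

/-- Substitution of variables in a rational function, computed on the reduced
fraction (numerator/denominator), with the usual junk-value convention if the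
denominator specializes to zero. -/
def subst {σ : Type*} (g : σ → FractionRing (MvPolynomial σ ℚ))
    (f : FractionRing (MvPolynomial σ ℚ)) : FractionRing (MvPolynomial σ ℚ) :=
  MvPolynomial.aeval g (IsFractionRing.num (MvPolynomial σ ℚ) f) /
    MvPolynomial.aeval g ((IsFractionRing.den (MvPolynomial σ ℚ) f : MvPolynomial σ ℚ))

/-- Variable indices for the field `ℚ(t, x₁,…,xₙ, y₁,…,yₙ)`. -/
abbrev Vars (n : ℕ) := Unit ⊕ Fin n ⊕ Fin n

/-- The field `ℚ(t, x₁,…,xₙ, y₁,…,yₙ)`. -/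
abbrev Kn (n : ℕ) := FractionRing (MvPolynomial (Vars n) ℚ)

/-- The indeterminate `t`. -/
def tv (n : ℕ) : Kn n :=
  algebraMap (MvPolynomial (Vars n) ℚ) (Kn n) (MvPolynomial.X (Sum.inl ()))

/-- The indeterminates `x₁,…,xₙ`. -/
def xv {n : ℕ} (i : Fin n) : Kn n :=
  algebraMap (MvPolynomial (Vars n) ℚ) (Kn n) (MvPolynomial.X (Sum.inr (Sum.inl i)))

/-- The indeterminates `y₁,…,yₙ`. -/
def yv {n : ℕ} (j : Fin n) : Kn n :=
  algebraMap (MvPolynomial (Vars n) ℚ) (Kn n) (MvPolynomial.X (Sum.inr (Sum.inr j)))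


end Gaudin

namespace MvPolynomial

variable {σ R : Type*} [CommRing R]

theorem X_sub_X_dvd_of_aeval_update_eq_zero [DecidableEq σ] {u v : σ} {p : MvPolynomial σ R}
    (h : aeval (Function.update X u (X v : MvPolynomial σ R)) p = 0) :
    (X u - X v : MvPolynomial σ R) ∣ p := by
  -- `p` as a polynomial in `X u` over `MvPolynomial σ R`; then `X u - X v ∣ p(X u) - p(X v)`.
  let ψ : MvPolynomial σ R →ₐ[R] Polynomial (MvPolynomial σ R) :=
    aeval (Function.update (Polynomial.C ∘ X) u Polynomial.X)
  have eval_ψ (w : σ) :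
      (ψ p).eval (X w) = aeval (Function.update X u (X w : MvPolynomial σ R)) p := by
    have : ((Polynomial.aeval (X w : MvPolynomial σ R)).restrictScalars R).comp ψ =
        aeval (Function.update X u (X w : MvPolynomial σ R)) := by
      ext s
      by_cases hs : s = u
      · subst hs; simp [ψ]
      · simp [ψ, hs]
    simpa using congrArg (fun f => f p) this
  have := Polynomial.sub_dvd_eval_sub (X u) (X v) (ψ p)
  rwa [eval_ψ, eval_ψ, h, Function.update_eq_self, aeval_X_left_apply, sub_zero] at this

variable [IsDomain R]

theorem irreducible_X_sub_X {u v : σ} (huv : u ≠ v) :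
    Irreducible (X u - X v : MvPolynomial σ R) := by
  classical
  refine irreducible_of_totalDegree_eq_one (le_antisymm ?_ ?_) fun c hc => ?_
  · exact (totalDegree_sub _ _).trans (by simp)
  · have hmem : Finsupp.single u 1 ∈ (X u - X v : MvPolynomial σ R).support := by
      simp [mem_support_iff, coeff_X, Finsupp.single_left_inj, huv.symm]
    simpa using le_totalDegree hmem
  · have := hc (Finsupp.single u 1)
    simp [coeff_X, Finsupp.single_left_inj, huv.symm] at this
    exact isUnit_of_dvd_one this

theorem not_X_sub_X_dvd_X_sub_X {a b c d : σ} (hcd : c ≠ d) (h : s(a, b) ≠ s(c, d)) :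
    ¬ (X a - X b : MvPolynomial σ R) ∣ X c - X d := by
  classical
  suffices ∃ w : σ → R, w a = w b ∧ w c ≠ w d by
    obtain ⟨w, hab, hcd⟩ := this
    rintro ⟨q, hq⟩
    apply hcd
    simpa [hab, sub_eq_zero] using congrArg (eval w) hq
  by_cases hc : c = a ∨ c = b
  · have hd : d ≠ a ∧ d ≠ b := by
      rcases hc with rfl | rfl <;> constructor <;> rintro rfl <;> simp_all [Sym2.eq_swap]
    exact ⟨fun s => if s = d then 1 else 0, by simp [hd.1.symm, hd.2.symm], by simp [hcd]⟩
  · push Not at hc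
    exact ⟨fun s => if s = c then 1 else 0, by simp [hc.1.symm, hc.2.symm], by simp [hcd.symm]⟩

theorem isRelPrime_X_sub_X {a b c d : σ} (hab : a ≠ b) (hcd : c ≠ d) (h : s(a, b) ≠ s(c, d)) :
    IsRelPrime (X a - X b : MvPolynomial σ R) (X c - X d) :=
  (irreducible_X_sub_X hab).isRelPrime_iff_not_dvd.mpr (not_X_sub_X_dvd_X_sub_X hcd h)

end MvPolynomial

namespace Gaudin

open MvPolynomial Finset

section Vandermonde

variable {σ R : Type*} [CommRing R] {n : ℕ}

theorem map_vand {S : Type*} [CommRing S] (f : R →+* S) (x : Fin n → R) :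
    f (vand x) = vand fun i => f (x i) := by
  simp only [vand, map_prod, map_sub]

theorem vand_comp_perm (x : Fin n → R) (w : Equiv.Perm (Fin n)) :
    vand (fun i => x (w i)) = ((Equiv.Perm.sign w : ℤ) : R) * vand x := by
  rw [vand, vand, ← Matrix.det_vandermonde, ← Matrix.det_vandermonde, ← Matrix.det_permute]
  rfl

variable [IsDomain R]

theorem vand_ne_zero {x : Fin n → R} (hx : Function.Injective x) : vand x ≠ 0 := by
  rw [vand, ← Matrix.det_vandermonde]
  exact Matrix.det_vandermonde_ne_zero_iff.mpr hx

variable [UniqueFactorizationMonoid R] {v w : Fin n → σ}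

theorem vand_X_dvd (hv : Function.Injective v) {p : MvPolynomial σ R}
    (h : ∀ i j, i < j → X (v j) - X (v i) ∣ p) :
    vand (fun i => (X (v i) : MvPolynomial σ R)) ∣ p := by
  rw [vand, Finset.prod_sigma']
  refine Finset.prod_dvd_of_isRelPrime ?_ fun ⟨i, j⟩ hij => h i j (by simpa using hij)
  rintro ⟨i, j⟩ hij ⟨i', j'⟩ hij' hne
  replace hij : i < j := by simpa using hij
  replace hij' : i' < j' := by simpa using hij'
  refine isRelPrime_X_sub_X (hv.ne hij.ne') (hv.ne hij'.ne') fun heq => hne ?_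
  rcases Sym2.eq_iff.mp heq with ⟨h1, h2⟩ | ⟨h1, h2⟩ <;> dsimp only at h1 h2
  · rw [hv h1, hv h2]
  · exact absurd (hij.trans ((hv h1).symm ▸ (hv h2).symm ▸ hij')) (lt_irrefl _)

theorem isRelPrime_vand_X (hv : Function.Injective v) (hw : Function.Injective w)
    (hvw : ∀ i j, v i ≠ w j) :
    IsRelPrime (vand (fun i => (X (v i) : MvPolynomial σ R))) (vand fun i => X (w i)) :=
  IsRelPrime.prod_left fun i _ => IsRelPrime.prod_left fun j hj =>
    IsRelPrime.prod_right fun i' _ => IsRelPrime.prod_right fun j' hj' =>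
      isRelPrime_X_sub_X (hv.ne (mem_Ioi.mp hj).ne') (hw.ne (mem_Ioi.mp hj').ne') fun heq => by
        rcases Sym2.eq_iff.mp heq with ⟨h, _⟩ | ⟨h, _⟩ <;> exact hvw _ _ h

end Vandermonde

section GaudinMatrix

variable {A : Type*} [CommRing A] {n : ℕ} (r : ℕ)

def gaudinMatrix (t : A) (x y : Fin n → A) : Matrix (Fin n) (Fin n) A :=
  Matrix.of fun i j => ∏ j' ∈ univ.erase j, ∏ k ∈ range (r + 1), (x i - t ^ k * y j')

theorem map_det_gaudinMatrix {B : Type*} [CommRing B] (f : A →+* B) (t : A) (x y : Fin n → A) :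
    f (gaudinMatrix r t x y).det =
      (gaudinMatrix r (f t) (fun i => f (x i)) fun j => f (y j)).det := by
  rw [RingHom.map_det]
  congr 1
  ext i j
  simp [gaudinMatrix]

theorem det_gaudinMatrix_eq_zero_of_x_eq {t : A} {x : Fin n → A} (y : Fin n → A) {i i' : Fin n}
    (hi : i ≠ i') (hx : x i = x i') : (gaudinMatrix r t x y).det = 0 :=
  Matrix.det_zero_of_row_eq hi (by ext j; simp [gaudinMatrix, hx])

theorem det_gaudinMatrix_eq_zero_of_y_eq {t : A} (x : Fin n → A) {y : Fin n → A} {j j' : Fin n}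
    (hj : j ≠ j') (hy : y j = y j') : (gaudinMatrix r t x y).det = 0 := by
  refine Matrix.det_zero_of_column_eq hj fun i => ?_
  set g := fun l => ∏ k ∈ range (r + 1), (x i - t ^ k * y l)
  change ∏ l ∈ univ.erase j, g l = ∏ l ∈ univ.erase j', g l
  rw [← mul_prod_erase _ _ (mem_erase.mpr ⟨hj.symm, mem_univ j'⟩),
    ← mul_prod_erase _ _ (mem_erase.mpr ⟨hj, mem_univ j⟩), erase_right_comm]
  simp only [g, hy]

variable {σ R : Type*} [CommRing R] (t : σ) (x y : Fin n → σ)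

theorem X_sub_X_dvd_det_gaudinMatrix_of_ne_x {i i' : Fin n} (hi : i ≠ i') (hx : x i ≠ x i') :
    (X (x i) - X (x i') : MvPolynomial σ R) ∣
      (gaudinMatrix r (X t) (fun i => X (x i)) fun j => X (y j)).det := by
  classical
  refine X_sub_X_dvd_of_aeval_update_eq_zero ?_
  rw [← AlgHom.coe_toRingHom, map_det_gaudinMatrix]
  exact det_gaudinMatrix_eq_zero_of_x_eq r _ hi (by simp [hx.symm])

theorem X_sub_X_dvd_det_gaudinMatrix_of_ne_y {j j' : Fin n} (hj : j ≠ j') (hy : y j ≠ y j') :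
    (X (y j) - X (y j') : MvPolynomial σ R) ∣
      (gaudinMatrix r (X t) (fun i => X (x i)) fun j => X (y j)).det := by
  classical
  refine X_sub_X_dvd_of_aeval_update_eq_zero ?_
  rw [← AlgHom.coe_toRingHom, map_det_gaudinMatrix]
  exact det_gaudinMatrix_eq_zero_of_y_eq r _ hj (by simp [hy.symm])

end GaudinMatrix

section Field

variable {K : Type*} [Field K] (n r : ℕ) (t : K) (x y : Fin n → K)

theorem gaudinF_eq_det_gaudinMatrix_div
    (hfactor : ∀ i j, ∏ k ∈ range (r + 1), (x i - t ^ k * y j) ≠ 0) :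
    gaudinF n r t x y = (gaudinMatrix r t x y).det / (vand x * vand y) := by
  have hrow : gaudinMatrix r t x y = Matrix.of fun i j =>
      (∏ j', ∏ k ∈ range (r + 1), (x i - t ^ k * y j')) *
        (∏ k ∈ range (r + 1), (x i - t ^ k * y j))⁻¹ := by
    ext i j
    rw [Matrix.of_apply, ← prod_erase_mul univ _ (mem_univ j), mul_inv_cancel_right₀ (hfactor i j)]
    rfl
  have hscale := Matrix.det_mul_column (fun i => ∏ j', ∏ k ∈ range (r + 1), (x i - t ^ k * y j'))
    (Matrix.of fun i j => (∏ k ∈ range (r + 1), (x i - t ^ k * y j))⁻¹)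
  simp only [Matrix.of_apply] at hscale
  rw [gaudinF, hrow, hscale, div_mul_eq_mul_div]

theorem gaudinF_perm_x (w : Equiv.Perm (Fin n)) :
    gaudinF n r t (fun i => x (w i)) y = gaudinF n r t x y := by
  have hdet :
      (Matrix.of fun i j : Fin n => (∏ k ∈ range (r + 1), (x (w i) - t ^ k * y j))⁻¹).det =
        ((Equiv.Perm.sign w : ℤ) : K) *
          (Matrix.of fun i j : Fin n => (∏ k ∈ range (r + 1), (x i - t ^ k * y j))⁻¹).det := by
    rw [← Matrix.det_permute]; rfl
  rw [gaudinF, gaudinF, hdet, vand_comp_perm,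
    Equiv.prod_comp w fun i => ∏ j, ∏ k ∈ range (r + 1), (x i - t ^ k * y j)]
  rcases Int.units_eq_one_or (Equiv.Perm.sign w) with hs | hs <;> simp [hs, div_neg]

theorem gaudinF_perm_y (w : Equiv.Perm (Fin n)) :
    gaudinF n r t x (fun j => y (w j)) = gaudinF n r t x y := by
  have hdet :
      (Matrix.of fun i j : Fin n => (∏ k ∈ range (r + 1), (x i - t ^ k * y (w j)))⁻¹).det =
        ((Equiv.Perm.sign w : ℤ) : K) *
          (Matrix.of fun i j : Fin n => (∏ k ∈ range (r + 1), (x i - t ^ k * y j))⁻¹).det := by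
    rw [← Matrix.det_permute']; rfl
  have hprod (i : Fin n) : ∏ j, ∏ k ∈ range (r + 1), (x i - t ^ k * y (w j)) =
      ∏ j, ∏ k ∈ range (r + 1), (x i - t ^ k * y j) :=
    Equiv.prod_comp w fun j => ∏ k ∈ range (r + 1), (x i - t ^ k * y j)
  simp only [gaudinF, hdet, vand_comp_perm, hprod]
  rcases Int.units_eq_one_or (Equiv.Perm.sign w) with hs | hs <;> simp [hs, div_neg]

end Field

theorem xv_injective (n : ℕ) : Function.Injective (xv (n := n)) :=
  (IsFractionRing.injective _ _).comp (X_injective.comp (Sum.inr_injective.comp Sum.inl_injective))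

theorem yv_injective (n : ℕ) : Function.Injective (yv (n := n)) :=
  (IsFractionRing.injective _ _).comp (X_injective.comp (Sum.inr_injective.comp Sum.inr_injective))

theorem xv_sub_tv_pow_mul_yv_ne_zero {n : ℕ} (i j : Fin n) (k : ℕ) :
    xv i - tv n ^ k * yv j ≠ 0 := by
  have h : (X (Sum.inr (Sum.inl i)) - X (Sum.inl ()) ^ k * X (Sum.inr (Sum.inr j)) :
      MvPolynomial (Vars n) ℚ) ≠ 0 := fun h => by
    simpa using congrArg (eval fun s => if s = Sum.inr (Sum.inl i) then (1 : ℚ) else 0) h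
  simpa [xv, tv, yv] using (map_ne_zero_iff _ (IsFractionRing.injective _ (Kn n))).mpr h

theorem gaudin_is_symmetric_polynomial_general (n r : ℕ) :
    (∃ P : MvPolynomial (Vars n) ℚ,
        algebraMap (MvPolynomial (Vars n) ℚ) (Kn n) P = gaudinF n r (tv n) xv yv) ∧
    (∀ w : Equiv.Perm (Fin n),
        gaudinF n r (tv n) (fun i => xv (w i)) yv = gaudinF n r (tv n) xv yv) ∧
    (∀ w : Equiv.Perm (Fin n),
        gaudinF n r (tv n) xv (fun j => yv (w j)) = gaudinF n r (tv n) xv yv) := by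
  refine ⟨?_, gaudinF_perm_x n r (tv n) xv yv, gaudinF_perm_y n r (tv n) xv yv⟩
  let x : Fin n → Vars n := fun i => Sum.inr (Sum.inl i)
  let y : Fin n → Vars n := fun j => Sum.inr (Sum.inr j)
  have hx : Function.Injective x := Sum.inr_injective.comp Sum.inl_injective
  have hy : Function.Injective y := Sum.inr_injective.comp Sum.inr_injective
  obtain ⟨P, hP⟩ := (isRelPrime_vand_X (R := ℚ) hx hy fun i j => by simp [x, y]).mul_dvd
    (vand_X_dvd hx fun i j hij =>
      X_sub_X_dvd_det_gaudinMatrix_of_ne_x r (Sum.inl ()) x y hij.ne' (hx.ne hij.ne'))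
    (vand_X_dvd hy fun i j hij =>
      X_sub_X_dvd_det_gaudinMatrix_of_ne_y r (Sum.inl ()) x y hij.ne' (hy.ne hij.ne'))
  refine ⟨P, ?_⟩
  have hmap := congrArg (algebraMap (MvPolynomial (Vars n) ℚ) (Kn n)) hP
  rw [map_det_gaudinMatrix, map_mul, map_mul, map_vand, map_vand] at hmap
  have hvand : vand xv * vand (yv (n := n)) ≠ 0 :=
    mul_ne_zero (vand_ne_zero (xv_injective n)) (vand_ne_zero (yv_injective n))
  have hfactor (i j : Fin n) : ∏ k ∈ range (r + 1), (xv i - tv n ^ k * yv j) ≠ 0 :=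
    prod_ne_zero_iff.mpr fun k _ => xv_sub_tv_pow_mul_yv_ne_zero i j k
  rw [gaudinF_eq_det_gaudinMatrix_div n r _ _ _ hfactor, eq_div_iff hvand, mul_comm]
  exact hmap.symm

/-- The rational function
`(R(x, y(1+t+⋯+t^r)) / (Δ(x)·Δ(y))) · det(1/∏_{k=0}^r (x_i - t^k y_j))`
is a polynomial in `x₁,…,xₙ, y₁,…,yₙ, t`, symmetric in `x₁,…,xₙ` and
symmetric in `y₁,…,yₙ`. -/
theorem gaudin_is_symmetric_polynomial (n r : ℕ) (hn : 1 ≤ n) (hr : 1 ≤ r) :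
    (∃ P : MvPolynomial (Vars n) ℚ,
        algebraMap (MvPolynomial (Vars n) ℚ) (Kn n) P = gaudinF n r (tv n) xv yv) ∧
    (∀ w : Equiv.Perm (Fin n),
        gaudinF n r (tv n) (fun i => xv (w i)) yv = gaudinF n r (tv n) xv yv) ∧
    (∀ w : Equiv.Perm (Fin n),
        gaudinF n r (tv n) xv (fun j => yv (w j)) = gaudinF n r (tv n) xv yv) :=
  gaudin_is_symmetric_polynomial_general n r

end Gaudin
end
end

section
/- For 1 ≤ i ≤ n−2, the operators T_i := ⋃_i − 1 satisfy the braid relation T_i T_{i+1} T_i = T_{i+1} T_i T_{i+1} as operators on rational functions of x₁,…,xₙ; moreover T_i T_j = T_j T_i whenever |i − j| ≥ 2. -/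
noncomputable section

open scoped BigOperators

namespace Gaudin

variable {R : Type*} [CommRing R]

variable {K : Type*} [Field K]

/-- The field `ℚ(t, x₁,…,xₙ)`. -/
abbrev K2 (n : ℕ) := FractionRing (MvPolynomial (Unit ⊕ Fin n) ℚ)

/-- The indeterminate `t`. -/
def t2 (n : ℕ) : K2 n :=
  algebraMap (MvPolynomial (Unit ⊕ Fin n) ℚ) (K2 n) (MvPolynomial.X (Sum.inl ()))

/-- The indeterminates `x₁,…,xₙ`. -/
def x2 {n : ℕ} (i : Fin n) : K2 n :=
  algebraMap (MvPolynomial (Unit ⊕ Fin n) ℚ) (K2 n) (MvPolynomial.X (Sum.inr i))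

/-- Action of a permutation `w ∈ S_n` on rational functions of `t, x₁,…,xₙ`,
permuting the `x`-variables. -/
def permAct2 {n : ℕ} (w : Equiv.Perm (Fin n)) : K2 n → K2 n :=
  subst (fun v => match v with
    | Sum.inl () => t2 n
    | Sum.inr i => x2 (w i))

/-- The operator `⋃_{(i,j)}` (for `j = i+1` this is `⋃_i`):
`f ⋃_i = (f·(t x_i - x_{i+1}) - f^{s_i}·(t x_{i+1} - x_i))/(x_i - x_{i+1})`. -/
def Uop {n : ℕ} (i j : Fin n) (f : K2 n) : K2 n :=
  (f * (t2 n * x2 i - x2 j) - permAct2 (Equiv.swap i j) f * (t2 n * x2 j - x2 i)) /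
    (x2 i - x2 j)

/-- The Hecke-algebra generator `T_i := ⋃_i - 1`. -/
def Top {n : ℕ} (i j : Fin n) (f : K2 n) : K2 n := Uop i j f - f

/-!
On a rational function, `Tᵢ f = α f + β f^{sᵢ}` with `α = (t xᵢ - xᵢ)/(xᵢ - x_{i+1})` and
`β = (xᵢ - t x_{i+1})/(xᵢ - x_{i+1})`. The `sᵢ` fix `t` and permute the `x`'s, so expanding both
sides of a relation gives combinations of the `f^w`, `w` a word in the two transpositions
involved. The words match by the braid (resp. commutation) relation in the symmetric group, and
their coefficients by an identity of rational functions in `t` and three (resp. four) of the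
`x`'s. Only the fact that the `sᵢ` are field automorphisms obeying these relations is used.
-/

lemma swap_braid {α : Type*} [DecidableEq α] {u v w : α} (huv : u ≠ v) (huw : u ≠ w)
    (hvw : v ≠ w) :
    Equiv.swap u v * Equiv.swap v w * Equiv.swap u v =
      Equiv.swap v w * Equiv.swap u v * Equiv.swap v w := by
  rw [Equiv.swap_mul_swap_mul_swap huv huw, Equiv.swap_comm u v, Equiv.swap_comm v w,
    Equiv.swap_mul_swap_mul_swap hvw.symm huw.symm, Equiv.swap_comm]

def heckeOp (s : K →+* K) (t a b g : K) : K :=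
  (g * (t * a - b) - s g * (t * b - a)) / (a - b) - g

lemma heckeOp_eq_add (s : K →+* K) {t a b : K} (hab : a ≠ b) (g : K) :
    heckeOp s t a b g = (t * a - a) / (a - b) * g + (a - t * b) / (a - b) * s g := by
  have : a - b ≠ 0 := sub_ne_zero.mpr hab
  unfold heckeOp
  field_simp
  ring

theorem heckeOp_braid (s₁ s₂ : K →+* K) {t a b c : K}
    (h₁t : s₁ t = t) (h₂t : s₂ t = t) (h₁a : s₁ a = b) (h₁c : s₁ c = c)
    (h₂a : s₂ a = a) (h₂b : s₂ b = c) (hab : a ≠ b) (hbc : b ≠ c) (hac : a ≠ c)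
    (h₁₁ : ∀ f, s₁ (s₁ f) = f) (h₂₂ : ∀ f, s₂ (s₂ f) = f)
    (h₁₂₁ : ∀ f, s₁ (s₂ (s₁ f)) = s₂ (s₁ (s₂ f))) (f : K) :
    heckeOp s₁ t a b (heckeOp s₂ t b c (heckeOp s₁ t a b f)) =
      heckeOp s₂ t b c (heckeOp s₁ t a b (heckeOp s₂ t b c f)) := by
  have h₁b : s₁ b = a := h₁a ▸ h₁₁ a
  have h₂c : s₂ c = b := h₂b ▸ h₂₂ b
  have : a - b ≠ 0 := sub_ne_zero.mpr hab
  have : b - c ≠ 0 := sub_ne_zero.mpr hbc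
  have : a - c ≠ 0 := sub_ne_zero.mpr hac
  simp only [heckeOp_eq_add _ hab, heckeOp_eq_add _ hbc, map_add, map_mul, map_div₀, map_sub,
    h₁t, h₂t, h₁a, h₁b, h₁c, h₂a, h₂b, h₂c, h₁₁, h₂₂, h₁₂₁]
  field_simp
  ring

theorem heckeOp_comm (s₁ s₂ : K →+* K) {t a b c d : K}
    (h₁t : s₁ t = t) (h₂t : s₂ t = t) (h₁c : s₁ c = c) (h₁d : s₁ d = d)
    (h₂a : s₂ a = a) (h₂b : s₂ b = b) (hab : a ≠ b) (hcd : c ≠ d)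
    (h₁₂ : ∀ f, s₁ (s₂ f) = s₂ (s₁ f)) (f : K) :
    heckeOp s₁ t a b (heckeOp s₂ t c d f) = heckeOp s₂ t c d (heckeOp s₁ t a b f) := by
  simp only [heckeOp_eq_add _ hab, heckeOp_eq_add _ hcd, map_add, map_mul, map_div₀, map_sub,
    h₁t, h₂t, h₁c, h₁d, h₂a, h₂b, h₁₂]
  ring

section PermAction

variable {n : ℕ}

def permHom (w : Equiv.Perm (Fin n)) : K2 n →+* K2 n :=
  (IsFractionRing.ringEquivOfRingEquiv
    (MvPolynomial.renameEquiv ℚ (Equiv.sumCongr (Equiv.refl Unit) w)).toRingEquiv).toRingHom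

lemma permHom_algebraMap (w : Equiv.Perm (Fin n)) (p : MvPolynomial (Unit ⊕ Fin n) ℚ) :
    permHom w (algebraMap _ (K2 n) p) =
      algebraMap _ (K2 n) (MvPolynomial.rename (Equiv.sumCongr (Equiv.refl Unit) w) p) := by
  simp [permHom]

lemma aeval_permVars (w : Equiv.Perm (Fin n)) (p : MvPolynomial (Unit ⊕ Fin n) ℚ) :
    MvPolynomial.aeval (fun v => match v with
      | Sum.inl () => t2 n
      | Sum.inr i => x2 (w i)) p =
      algebraMap _ (K2 n) (MvPolynomial.rename (Equiv.sumCongr (Equiv.refl Unit) w) p) := by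
  have hvars : (fun v : Unit ⊕ Fin n => match v with
      | Sum.inl () => t2 n
      | Sum.inr i => x2 (w i)) =
      (fun v => algebraMap _ (K2 n) (MvPolynomial.X v : MvPolynomial (Unit ⊕ Fin n) ℚ)) ∘
        Equiv.sumCongr (Equiv.refl Unit) w := by
    funext v
    rcases v with ⟨⟩ | i <;> rfl
  rw [hvars, ← MvPolynomial.aeval_rename]
  conv_rhs => rw [← MvPolynomial.aeval_X_left_apply (MvPolynomial.rename _ p)]
  exact (MvPolynomial.comp_aeval_apply (f := MvPolynomial.X)
    (IsScalarTower.toAlgHom ℚ _ (K2 n)) _).symm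

lemma permAct2_eq_permHom (w : Equiv.Perm (Fin n)) : permAct2 w = permHom w := by
  funext f
  unfold permAct2 subst
  rw [aeval_permVars, aeval_permVars, ← permHom_algebraMap, ← permHom_algebraMap,
    ← map_div₀, IsFractionRing.mk'_num_den']

lemma permHom_t2 (w : Equiv.Perm (Fin n)) : permHom w (t2 n) = t2 n := by
  simp [t2, permHom_algebraMap]

lemma permHom_x2 (w : Equiv.Perm (Fin n)) (i : Fin n) : permHom w (x2 i) = x2 (w i) := by
  simp [x2, permHom_algebraMap]

lemma permHom_permHom (w v : Equiv.Perm (Fin n)) (f : K2 n) :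
    permHom w (permHom v f) = permHom (w * v) f := by
  rw [← IsFractionRing.mk'_num_den' (MvPolynomial (Unit ⊕ Fin n) ℚ) f]
  have hvars : ⇑(Equiv.sumCongr (Equiv.refl Unit) w) ∘ ⇑(Equiv.sumCongr (Equiv.refl Unit) v) =
      ⇑(Equiv.sumCongr (Equiv.refl Unit) (w * v)) := by
    funext s
    rcases s with _ | _ <;> rfl
  simp only [map_div₀, permHom_algebraMap, MvPolynomial.rename_rename, hvars]

lemma permHom_one (f : K2 n) : permHom 1 f = f := by
  rw [← IsFractionRing.mk'_num_den' (MvPolynomial (Unit ⊕ Fin n) ℚ) f]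
  have hvars : ⇑(Equiv.sumCongr (Equiv.refl Unit) (1 : Equiv.Perm (Fin n))) = id := by
    funext s
    rcases s with _ | _ <;> rfl
  simp only [map_div₀, permHom_algebraMap, hvars, MvPolynomial.rename_id_apply]

lemma permHom_swap_swap (i j : Fin n) (f : K2 n) :
    permHom (Equiv.swap i j) (permHom (Equiv.swap i j) f) = f := by
  rw [permHom_permHom, Equiv.swap_mul_self, permHom_one]

lemma x2_injective : Function.Injective (x2 (n := n)) := fun _ _ h =>
  Sum.inr_injective (MvPolynomial.X_injective
    (IsFractionRing.injective (MvPolynomial (Unit ⊕ Fin n) ℚ) (K2 n) h))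

lemma Top_eq_heckeOp (u v : Fin n) :
    Top u v = heckeOp (permHom (Equiv.swap u v)) (t2 n) (x2 u) (x2 v) := by
  funext f
  rw [Top, Uop, permAct2_eq_permHom, heckeOp]

theorem Top_braid {u v w : Fin n} (h : [u, v, w].Nodup) (f : K2 n) :
    Top u v (Top v w (Top u v f)) = Top v w (Top u v (Top v w f)) := by
  obtain ⟨⟨huv, huw⟩, hvw⟩ : (u ≠ v ∧ u ≠ w) ∧ v ≠ w := by simpa using h
  simp only [Top_eq_heckeOp]
  refine heckeOp_braid _ _ (permHom_t2 _) (permHom_t2 _) ?_ ?_ ?_ ?_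
    (x2_injective.ne huv) (x2_injective.ne hvw) (x2_injective.ne huw)
    (permHom_swap_swap u v) (permHom_swap_swap v w) (fun g => ?_) f
  · rw [permHom_x2, Equiv.swap_apply_left]
  · rw [permHom_x2, Equiv.swap_apply_of_ne_of_ne huw.symm hvw.symm]
  · rw [permHom_x2, Equiv.swap_apply_of_ne_of_ne huv huw]
  · rw [permHom_x2, Equiv.swap_apply_left]
  · simp only [permHom_permHom, ← mul_assoc, swap_braid huv huw hvw]

theorem Top_comm {u v p q : Fin n} (h : [u, v, p, q].Nodup) (f : K2 n) :
    Top u v (Top p q f) = Top p q (Top u v f) := by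
  have hcomm := (Equiv.Perm.disjoint_swap_swap h).commute
  obtain ⟨⟨huv, hup, huq⟩, ⟨hvp, hvq⟩, hpq⟩ :
      (u ≠ v ∧ u ≠ p ∧ u ≠ q) ∧ (v ≠ p ∧ v ≠ q) ∧ p ≠ q := by simpa using h
  simp only [Top_eq_heckeOp]
  refine heckeOp_comm _ _ (permHom_t2 _) (permHom_t2 _) ?_ ?_ ?_ ?_
    (x2_injective.ne huv) (x2_injective.ne hpq) (fun g => ?_) f
  · rw [permHom_x2, Equiv.swap_apply_of_ne_of_ne hup.symm hvp.symm]
  · rw [permHom_x2, Equiv.swap_apply_of_ne_of_ne huq.symm hvq.symm]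
  · rw [permHom_x2, Equiv.swap_apply_of_ne_of_ne hup huq]
  · rw [permHom_x2, Equiv.swap_apply_of_ne_of_ne hvp hvq]
  · rw [permHom_permHom, permHom_permHom, hcomm.eq]

end PermAction

/-- the operators `T_i = ⋃_i - 1` satisfy the braid relations
`T_i T_{i+1} T_i = T_{i+1} T_i T_{i+1}` (for `1 ≤ i ≤ n-2`), and
`T_i T_j = T_j T_i` when `|i - j| ≥ 2`. -/
theorem Top_braid_relations (n : ℕ) :
    (∀ (i : ℕ) (hi : i + 2 < n), ∀ f : K2 n,
      Top ⟨i, by omega⟩ ⟨i + 1, by omega⟩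
          (Top ⟨i + 1, by omega⟩ ⟨i + 2, hi⟩
            (Top ⟨i, by omega⟩ ⟨i + 1, by omega⟩ f)) =
        Top ⟨i + 1, by omega⟩ ⟨i + 2, hi⟩
          (Top ⟨i, by omega⟩ ⟨i + 1, by omega⟩
            (Top ⟨i + 1, by omega⟩ ⟨i + 2, hi⟩ f))) ∧
    (∀ (i j : ℕ) (hi : i + 1 < n) (hj : j + 1 < n),
      (i + 2 ≤ j ∨ j + 2 ≤ i) → ∀ f : K2 n,
      Top ⟨i, by omega⟩ ⟨i + 1, hi⟩ (Top ⟨j, by omega⟩ ⟨j + 1, hj⟩ f) =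
        Top ⟨j, by omega⟩ ⟨j + 1, hj⟩ (Top ⟨i, by omega⟩ ⟨i + 1, hi⟩ f)) := by
  refine ⟨fun i hi f => Top_braid ?_ f, fun i j hi hj hij f => Top_comm ?_ f⟩
  · simp [Fin.ext_iff]
  · simp [Fin.ext_iff]
    omega

end Gaudin
end
end

section
/- (Vanishing characterization of factorial Schur functions.) Let a₁, a₂, … be indeterminates. For a partition λ = (λ₁ ≥ ⋯ ≥ λₙ ≥ 0), define the factorial Schur polynomial s_λ(x | a) = det( ∏_{l=1}^{λ_j + n − j}(x_i − a_l) )_{i,j=1,…,n} / Δ(x), where Δ(x) = ∏_{1≤i<j≤n}(x_i − x_j). For a partition μ with at most n parts, set x^{(μ)} = (a_{μ₁+n}, a_{μ₂+n−1}, …, a_{μₙ+1}). Then s_λ(x^{(μ)} | a) ≠ 0 if and only if the diagram of μ contains the diagram of λ (i.e. μ_i ≥ λ_i for all i); in particular s_λ(x^{(μ)} | a) = 0 for every partition μ ≠ λ with |μ| ≤ |λ|, while s_λ(x^{(λ)} | a) ≠ 0. -/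
/-!
Put `m i = μ_i + n - i` and `p j = λ_j + n - 1 - j`; both are strictly decreasing, the
denominator `Δ(x^{(μ)})` is a product of differences of distinct indeterminates, and the
numerator is `det (∏_{l=1}^{p j} (a_{m i} - a_l))`, whose entry `(i, j)` vanishes as soon as
`m i ≤ p j`.

If `λ_k > μ_k`, i.e. `m k ≤ p k`, then `m i ≤ m k ≤ p k ≤ p j` for all `i ≥ k ≥ j`: a zero
block whose numbers of rows and columns add up to `n + 1`, so the determinant vanishes.

If `λ ⊆ μ`, i.e. `p i < m i` for all `i`, specialise `a_l ↦ X ^ l` in `ℚ[X]`. Every entry then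
has degree at most `m i * p j`, the diagonal entries are monic of degree exactly `m i * p i`, and
by the strict rearrangement inequality `∑ m (σ i) * p i < ∑ m i * p i` for `σ ≠ 1`. Hence the
determinant is monic, in particular nonzero.
-/

noncomputable section

open scoped BigOperators

namespace Gaudin

/-- The field `ℚ(a₁, a₂, …)` generated by countably many indeterminates
(`a 0` is unused; the relevant variables are `a_l` for `l ≥ 1`). -/
abbrev K19 := FractionRing (MvPolynomial ℕ ℚ)

/-- The indeterminates `a_l`. -/
def av (l : ℕ) : K19 :=
  algebraMap (MvPolynomial ℕ ℚ) K19 (MvPolynomial.X l)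

/-- The factorial Schur polynomial
`s_λ(x | a) = det( ∏_{l=1}^{λ_j + n - j} (x_i - a_l) ) / Δ(x)`,
with `Δ(x) = ∏_{i<j}(x_i - x_j)` (rows `i`, columns `j`, both `1`-indexed). -/
def facSchur (n : ℕ) (lam : Fin n → ℕ) (x : Fin n → K19) : K19 :=
  Matrix.det (Matrix.of fun i j : Fin n =>
      ∏ l ∈ Finset.Icc 1 (lam j + (n - 1 - (j : ℕ))), (x i - av l)) /
    ∏ i : Fin n, ∏ j ∈ Finset.Ioi i, (x i - x j)

/-- The specialization point `x^{(μ)} = (a_{μ₁+n}, a_{μ₂+n-1}, …, a_{μₙ+1})`. -/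
def xspec (n : ℕ) (mu : Fin n → ℕ) : Fin n → K19 :=
  fun i => av (mu i + n - (i : ℕ))

end Gaudin

open Finset Polynomial

theorem Equiv.Perm.sum_comp_perm_mul_lt_sum_mul_of_strictAnti {ι α : Type*} [Fintype ι]
    [LinearOrder ι] [Semiring α] [LinearOrder α] [IsStrictOrderedRing α] [ExistsAddOfLE α]
    {f g : ι → α} (hf : StrictAnti f) (hg : StrictAnti g) {σ : Equiv.Perm ι} (hσ : σ ≠ 1) :
    ∑ i, f (σ i) * g i < ∑ i, f i * g i := by
  have hfg : Monovary f g := fun i j hij => (hf (hg.lt_iff_gt.mp hij)).le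
  refine hfg.sum_comp_perm_mul_lt_sum_mul_iff.2 fun hσg => hσ ?_
  have hσmono : StrictMono σ := fun a b hab =>
    (hf.le_iff_ge.mp (hσg (hg hab))).lt_of_ne (σ.injective.ne hab.ne)
  exact Equiv.ext (congrFun hσmono.eq_id)

theorem Matrix.det_eq_zero_of_card_lt_card_add_card {ι R : Type*} [Fintype ι] [DecidableEq ι]
    [CommRing R] (M : Matrix ι ι R) (s t : Finset ι) (hst : Fintype.card ι < #s + #t)
    (h : ∀ i ∈ s, ∀ j ∈ t, M i j = 0) : M.det = 0 := by
  refine M.det_apply.trans (sum_eq_zero fun σ _ => ?_)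
  obtain ⟨i, hi⟩ : (s ∩ t.map σ.toEmbedding).Nonempty :=
    inter_nonempty_of_card_lt_card_add_card (subset_univ _) (subset_univ _) (by simpa using hst)
  obtain ⟨hs, j, ht, rfl⟩ := (mem_inter.1 hi).imp_right mem_map.1
  rw [prod_eq_zero (f := fun i => M (σ i) i) (mem_univ j) (h _ hs j ht), smul_zero]

theorem Polynomial.monic_det_of_natDegree_lt {ι R : Type*} [Fintype ι] [DecidableEq ι]
    [CommRing R] [Nontrivial R] (M : Matrix ι ι R[X]) (hdiag : (∏ i, M i i).Monic)
    (hoff : ∀ σ : Equiv.Perm ι, σ ≠ 1 → (∏ i, M (σ i) i).natDegree < (∏ i, M i i).natDegree) :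
    M.det.Monic := by
  rw [M.det_apply, ← add_sum_erase _ _ (mem_univ 1)]
  simp only [Equiv.Perm.sign_one, one_smul, Equiv.Perm.one_apply]
  refine hdiag.add_of_left ((degree_sum_le _ _).trans_lt ?_)
  rw [degree_eq_natDegree hdiag.ne_zero]
  refine (Finset.sup_lt_iff (WithBot.bot_lt_coe _)).2 fun σ hσ => ?_
  rw [Units.smul_def]
  exact (degree_smul_le _ _).trans_lt
    (degree_le_natDegree.trans_lt (WithBot.coe_lt_coe.2 (hoff σ (ne_of_mem_erase hσ))))

theorem Polynomial.monic_X_pow_sub_X_pow {R : Type*} [Ring R] {a b : ℕ} (h : b < a) :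
    (X ^ a - X ^ b : R[X]).Monic :=
  monic_X_pow_sub ((degree_X_pow_le b).trans_lt (WithBot.coe_lt_coe.2 h))

theorem Polynomial.natDegree_X_pow_sub_X_pow {R : Type*} [Ring R] [Nontrivial R] {a b : ℕ}
    (h : b < a) : (X ^ a - X ^ b : R[X]).natDegree = a := by
  rw [natDegree_sub_eq_left_of_natDegree_lt] <;> simp [h]

namespace Gaudin

section FacPowMatrix

variable {ι R : Type*} [CommRing R]

/-- Entry `(i, j)` is the factorial power `(y_{m i} | y)^{p j}`. With `y = av`,
`m i = μ_i + n - i` and `p j = λ_j + n - 1 - j` this is the numerator matrix of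
`s_λ(x^{(μ)} | a)`. -/
def facPowMatrix (y : ℕ → R) (m p : ι → ℕ) : Matrix ι ι R :=
  Matrix.of fun i j => ∏ l ∈ Icc 1 (p j), (y (m i) - y l)

@[simp]
theorem facPowMatrix_apply (y : ℕ → R) (m p : ι → ℕ) (i j : ι) :
    facPowMatrix y m p i j = ∏ l ∈ Icc 1 (p j), (y (m i) - y l) :=
  rfl

theorem facPowMatrix_apply_eq_zero (y : ℕ → R) {m p : ι → ℕ} {i j : ι} (hm : 0 < m i)
    (hmp : m i ≤ p j) : facPowMatrix y m p i j = 0 :=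
  prod_eq_zero (mem_Icc.2 ⟨hm, hmp⟩) (sub_self _)

theorem map_facPowMatrix {S : Type*} [CommRing S] (f : R →+* S) (y : ℕ → R) (m p : ι → ℕ) :
    (facPowMatrix y m p).map f = facPowMatrix (f ∘ y) m p := by
  ext i j
  simp

theorem det_facPowMatrix_eq_zero [Fintype ι] [DecidableEq ι] [LinearOrder ι] (y : ℕ → R)
    {m p : ι → ℕ} (hm : Antitone m) (hp : Antitone p) (hm0 : ∀ i, 0 < m i) {k : ι}
    (hk : m k ≤ p k) : (facPowMatrix y m p).det = 0 := by
  set s : Finset ι := {i | k ≤ i}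
  set t : Finset ι := {j | j ≤ k}
  have hcard : Fintype.card ι < #s + #t := by
    have hunion : s ∪ t = univ := by
      ext i; simp [s, t, le_total]
    have hinter : s ∩ t = {k} := by
      ext i; simp [s, t, le_antisymm_iff, and_comm]
    rw [← card_union_add_card_inter, hunion, hinter, card_univ, card_singleton]
    omega
  refine Matrix.det_eq_zero_of_card_lt_card_add_card _ s t hcard
    fun i hi j hj => facPowMatrix_apply_eq_zero y (hm0 i) ?_
  simp only [s, t, mem_filter_univ] at hi hj
  exact (hm hi).trans (hk.trans (hp hj))

theorem natDegree_facPowMatrix_X_pow_le {m p : ι → ℕ} {i : ι} (hm : 0 < m i) (j : ι) :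
    (facPowMatrix (X ^ · : ℕ → R[X]) m p i j).natDegree ≤ m i * p j := by
  rcases le_or_gt (m i) (p j) with hmp | hpm
  · simp only [facPowMatrix_apply_eq_zero _ hm hmp, natDegree_zero, zero_le]
  rw [facPowMatrix_apply]
  refine (natDegree_prod_le _ _).trans ((sum_le_card_nsmul _ _ (m i) fun l hl => ?_).trans ?_)
  · have hl : l ≤ m i := by grind
    exact (natDegree_sub_le _ _).trans
      (max_le (natDegree_X_pow_le _) ((natDegree_X_pow_le _).trans hl))
  · simp [mul_comm]

theorem monic_facPowMatrix_X_pow {m p : ι → ℕ} {i j : ι} (hpm : p j < m i) :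
    (facPowMatrix (X ^ · : ℕ → R[X]) m p i j).Monic := by
  rw [facPowMatrix_apply]
  exact monic_prod_of_monic _ _ fun l hl => monic_X_pow_sub_X_pow (by grind)

variable [Nontrivial R]

theorem natDegree_facPowMatrix_X_pow {m p : ι → ℕ} {i j : ι} (hpm : p j < m i) :
    (facPowMatrix (X ^ · : ℕ → R[X]) m p i j).natDegree = m i * p j := by
  rw [facPowMatrix_apply, natDegree_prod_of_monic _ _ fun l hl => monic_X_pow_sub_X_pow (by grind),
    sum_congr rfl fun l hl => natDegree_X_pow_sub_X_pow (R := R) (by grind)]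
  simp [mul_comm]

variable [Fintype ι] [DecidableEq ι] [LinearOrder ι]

theorem monic_det_facPowMatrix_X_pow {m p : ι → ℕ} (hm : StrictAnti m) (hp : StrictAnti p)
    (hpm : ∀ i, p i < m i) : (facPowMatrix (X ^ · : ℕ → R[X]) m p).det.Monic := by
  refine monic_det_of_natDegree_lt _
    (monic_prod_of_monic _ _ fun i _ => monic_facPowMatrix_X_pow (hpm i)) fun σ hσ => ?_
  rw [natDegree_prod_of_monic _ _ fun i _ => monic_facPowMatrix_X_pow (hpm i)]
  calc (∏ i, facPowMatrix (X ^ · : ℕ → R[X]) m p (σ i) i).natDegree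
      ≤ ∑ i, (facPowMatrix (X ^ · : ℕ → R[X]) m p (σ i) i).natDegree := natDegree_prod_le _ _
    _ ≤ ∑ i, m (σ i) * p i :=
      sum_le_sum fun i _ => natDegree_facPowMatrix_X_pow_le (Nat.zero_lt_of_lt (hpm (σ i))) i
    _ < ∑ i, m i * p i := Equiv.Perm.sum_comp_perm_mul_lt_sum_mul_of_strictAnti hm hp hσ
    _ = ∑ i, (facPowMatrix (X ^ · : ℕ → R[X]) m p i i).natDegree :=
      sum_congr rfl fun i _ => (natDegree_facPowMatrix_X_pow (hpm i)).symm

theorem det_facPowMatrix_X_ne_zero_iff {m p : ι → ℕ} (hm : StrictAnti m) (hp : StrictAnti p)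
    (hm0 : ∀ i, 0 < m i) :
    (facPowMatrix (MvPolynomial.X : ℕ → MvPolynomial ℕ R) m p).det ≠ 0 ↔ ∀ i, p i < m i := by
  refine ⟨fun hdet => ?_, fun hpm hdet => ?_⟩
  · by_contra! ⟨k, hk⟩
    exact hdet (det_facPowMatrix_eq_zero _ hm.antitone hp.antitone hm0 hk)
  · let φ : MvPolynomial ℕ R →+* R[X] := MvPolynomial.eval₂Hom C (X ^ ·)
    have hφ : φ ∘ MvPolynomial.X = (X ^ ·) := funext fun l => MvPolynomial.eval₂Hom_X' _ _ _
    apply (monic_det_facPowMatrix_X_pow (R := R) hm hp hpm).ne_zero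
    rw [← hφ, ← map_facPowMatrix, ← RingHom.mapMatrix_apply, ← RingHom.map_det, hdet, map_zero]

end FacPowMatrix

theorem av_injective : Function.Injective av :=
  (IsFractionRing.injective (MvPolynomial ℕ ℚ) K19).comp MvPolynomial.X_injective

theorem facSchur_xspec_ne_zero_iff {n : ℕ} {lam mu : Fin n → ℕ} (hlam : Antitone lam)
    (hmu : Antitone mu) : facSchur n lam (xspec n mu) ≠ 0 ↔ ∀ i, lam i ≤ mu i := by
  set m : Fin n → ℕ := fun i => mu i + n - i
  set p : Fin n → ℕ := fun j => lam j + (n - 1 - j)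
  have hm : StrictAnti m := fun i j hij => by
    have := hmu hij.le; have : (i : ℕ) < j := hij; simp only [m]; omega
  have hp : StrictAnti p := fun i j hij => by
    have := hlam hij.le; have : (i : ℕ) < j := hij; simp only [p]; omega
  have hm0 : ∀ i, 0 < m i := fun i => by simp only [m]; omega
  have hΔ : ∏ i : Fin n, ∏ j ∈ Ioi i, (xspec n mu i - xspec n mu j) ≠ 0 :=
    prod_ne_zero_iff.2 fun i _ => prod_ne_zero_iff.2 fun j hj =>
      sub_ne_zero.2 (av_injective.ne (hm (mem_Ioi.1 hj)).ne')
  have hdet : (facPowMatrix av m p).det =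
      algebraMap (MvPolynomial ℕ ℚ) K19 (facPowMatrix MvPolynomial.X m p).det := by
    rw [RingHom.map_det, RingHom.mapMatrix_apply, map_facPowMatrix]
    rfl
  change (facPowMatrix av m p).det / _ ≠ 0 ↔ _
  rw [div_ne_zero_iff, hdet, ne_eq, map_eq_zero_iff _ (IsFractionRing.injective _ _), ← ne_eq,
    det_facPowMatrix_X_ne_zero_iff hm hp hm0]
  simp only [hΔ, ne_eq, not_false_eq_true, and_true, m, p]
  exact forall_congr' fun i => by omega

theorem facSchur_vanishing_general (n : ℕ) (lam mu : Fin n → ℕ)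
    (hlam : Antitone lam) (hmu : Antitone mu) :
    (facSchur n lam (xspec n mu) ≠ 0 ↔ ∀ i, lam i ≤ mu i) ∧
    ((mu ≠ lam ∧ ∑ i : Fin n, mu i ≤ ∑ i : Fin n, lam i) →
      facSchur n lam (xspec n mu) = 0) ∧
    facSchur n lam (xspec n lam) ≠ 0 := by
  refine ⟨facSchur_xspec_ne_zero_iff hlam hmu, fun ⟨hne, hsum⟩ => ?_,
    (facSchur_xspec_ne_zero_iff hlam hlam).2 fun _ => le_rfl⟩
  by_contra hfac
  have hle := (facSchur_xspec_ne_zero_iff hlam hmu).1 hfac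
  have heq := (sum_eq_sum_iff_of_le fun i _ => hle i).1
    (hsum.antisymm' (sum_le_sum fun i _ => hle i))
  exact hne (funext fun i => (heq i (mem_univ i)).symm)

/-- vanishing characterization of factorial Schur functions:
`s_λ(x^{(μ)} | a) ≠ 0` iff the diagram of `μ` contains the diagram of `λ`;
in particular `s_λ(x^{(μ)} | a) = 0` for every partition `μ ≠ λ` with
`|μ| ≤ |λ|`, while `s_λ(x^{(λ)} | a) ≠ 0`. -/
theorem facSchur_vanishing (n : ℕ) (hn : 0 < n) (lam mu : Fin n → ℕ)
    (hlam : Antitone lam) (hmu : Antitone mu) :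
    (facSchur n lam (xspec n mu) ≠ 0 ↔ ∀ i, lam i ≤ mu i) ∧
    ((mu ≠ lam ∧ ∑ i : Fin n, mu i ≤ ∑ i : Fin n, lam i) →
      facSchur n lam (xspec n mu) = 0) ∧
    facSchur n lam (xspec n lam) ≠ 0 :=
  facSchur_vanishing_general n lam mu hlam hmu

end Gaudin
end
end
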